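/- The Anderson-Darling statistic, expressed via the integral form A² = n ∫_ℝ (F_n(x) - Φ(x))² / (Φ(x)(1 - Φ(x))) φ(x) dx, equals the computable form -n - (1/n)Σ_{i=1}^n (2i-1)[log u_{(i)} + log(1 - u_{(n+1-i)})], where u_{(i)} = Φ(X_{(i)}). -/

import Mathlib

/-!
Write c = F_n(x). For 0 < Φ < 1 the integrand splits as
c² φ/Φ + (1 - c)² φ/(1 - Φ) - φ. For a sorted sample, the pairs (i, j) with max i j = k
number 2k + 1, so F_n(x)² = n⁻² ∑ₖ (2k + 1)·1[X_k ≤ x]; with min instead of max,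
(1 - F_n(x))² = n⁻² ∑ₖ (2k + 1)·1[x < X_{n-1-k}]. Since φ/Φ and φ/(1 - Φ) are the
derivatives of log Φ and -log (1 - Φ), which vanish at +∞ and -∞ respectively, the tail
integrals are -log Φ(X_k) and -log (1 - Φ(X_k)), while ∫ φ = 1. Nothing else about Φ
enters, so the identity holds for every distribution function with a density that stays
strictly between 0 and 1.
-/

/-- The standard normal density. -/
noncomputable def stdNormalPDF (t : ℝ) : ℝ := Real.exp (-t ^ 2 / 2) / Real.sqrt (2 * Real.pi)

/-- The standard normal cumulative distribution function. -/
noncomputable def stdNormalCDF (x : ℝ) : ℝ := ∫ t in Set.Iic x, stdNormalPDF t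

/-- The empirical CDF of a sample. -/
noncomputable def empiricalCDF (n : ℕ) (X : Fin n → ℝ) (x : ℝ) : ℝ :=
  ((Finset.univ.filter fun i => X i ≤ x).card : ℝ) / (n : ℝ)

open MeasureTheory ProbabilityTheory Set Filter Real Topology

theorem integrableOn_Iic_deriv_of_nonneg' {g g' : ℝ → ℝ} {a l : ℝ}
    (hderiv : ∀ x ∈ Iic a, HasDerivAt g (g' x) x) (g'pos : ∀ x ∈ Iio a, 0 ≤ g' x)
    (hg : Tendsto g atBot (𝓝 l)) : IntegrableOn g' (Iic a) := by
  have hderiv_neg : ∀ x ∈ Ici (-a), HasDerivAt (fun y ↦ -g (-y)) (g' (-x)) x :=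
    fun x hx ↦ by simpa [Function.comp_def] using
      ((hderiv (-x) (show -x ≤ a from neg_le.1 hx)).scomp x (hasDerivAt_neg x)).fun_neg
  have hint := integrableOn_Ioi_deriv_of_nonneg' hderiv_neg
    (fun x hx ↦ g'pos (-x) (show -x < a from neg_lt.1 hx)) (hg.comp tendsto_neg_atTop_atBot).neg
  rw [← integrableOn_Ici_iff_integrableOn_Ioi] at hint
  rw [← (Measure.measurePreserving_neg volume).integrableOn_comp_preimage
    (Homeomorph.neg ℝ).measurableEmbedding]
  simpa [Function.comp_def] using hint

theorem Fin.sum_sum_max {M : Type*} [AddCommMonoid M] :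
    ∀ {n : ℕ} (g : Fin n → M),
      ∑ i, ∑ j, g (max i j) = ∑ k : Fin n, (2 * (k : ℕ) + 1) • g k
  | 0, _ => by simp
  | n + 1, g => by
    have hcast : ∀ i j : Fin n, max i.castSucc j.castSucc = (max i j).castSucc :=
      fun i j ↦ (Fin.strictMono_castSucc.monotone.map_max).symm
    simp only [Fin.sum_univ_castSucc, hcast, Fin.sum_sum_max (fun k ↦ g k.castSucc),
      max_eq_right (Fin.castSucc_lt_last _).le, max_eq_left (Fin.castSucc_lt_last _).le,
      max_self, Finset.sum_const, Finset.card_univ, Fintype.card_fin, Finset.sum_add_distrib,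
      Fin.val_castSucc, Fin.val_last, add_smul, two_mul, one_smul]
    abel

theorem Fin.sum_sum_min {M : Type*} [AddCommMonoid M] {n : ℕ} (g : Fin n → M) :
    ∑ i, ∑ j, g (min i j) = ∑ k : Fin n, (2 * (k : ℕ) + 1) • g k.rev := by
  rw [← Fin.sum_sum_max, ← Equiv.sum_comp Fin.revPerm]
  refine Fintype.sum_congr _ _ fun i ↦ ?_
  rw [← Equiv.sum_comp Fin.revPerm]
  refine Fintype.sum_congr _ _ fun j ↦ ?_
  simp [Fin.rev_anti.map_max]

section DistributionTails

variable {F f : ℝ → ℝ}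

theorem integrable_deriv_of_nonneg_of_tendsto {l₀ l₁ : ℝ}
    (hderiv : ∀ x, HasDerivAt F (f x) x) (hf : ∀ x, 0 ≤ f x)
    (hbot : Tendsto F atBot (𝓝 l₀)) (htop : Tendsto F atTop (𝓝 l₁)) :
    Integrable f := by
  rw [← integrableOn_univ, ← Iic_union_Ioi (a := 0)]
  exact (integrableOn_Iic_deriv_of_nonneg' (fun x _ ↦ hderiv x) (fun x _ ↦ hf x) hbot).union
    (integrableOn_Ioi_deriv_of_nonneg' (fun x _ ↦ hderiv x) (fun x _ ↦ hf x) htop)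

theorem integrableOn_Ioi_div_of_hasDerivAt (hderiv : ∀ x, HasDerivAt F (f x) x)
    (hf : ∀ x, 0 ≤ f x) (hpos : ∀ x, 0 < F x) (htop : Tendsto F atTop (𝓝 1)) (a : ℝ) :
    IntegrableOn (fun x ↦ f x / F x) (Ioi a) :=
  integrableOn_Ioi_deriv_of_nonneg' (fun x _ ↦ (hderiv x).log (hpos x).ne')
    (fun x _ ↦ div_nonneg (hf x) (hpos x).le) (htop.log one_ne_zero)

theorem integral_Ioi_div_of_hasDerivAt (hderiv : ∀ x, HasDerivAt F (f x) x)
    (hf : ∀ x, 0 ≤ f x) (hpos : ∀ x, 0 < F x) (htop : Tendsto F atTop (𝓝 1)) (a : ℝ) :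
    ∫ x in Ioi a, f x / F x = -log (F a) := by
  rw [integral_Ioi_of_hasDerivAt_of_nonneg' (fun x _ ↦ (hderiv x).log (hpos x).ne')
    (fun x _ ↦ div_nonneg (hf x) (hpos x).le) (htop.log one_ne_zero), log_one, zero_sub]

theorem hasDerivAt_neg_log_one_sub (hderiv : ∀ x, HasDerivAt F (f x) x)
    (hlt : ∀ x, F x < 1) (x : ℝ) :
    HasDerivAt (fun y ↦ -log (1 - F y)) (f x / (1 - F x)) x := by
  simpa [neg_div] using (((hderiv x).const_sub 1).log (sub_pos.2 (hlt x)).ne').fun_neg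

theorem integrableOn_Iic_div_one_sub_of_hasDerivAt (hderiv : ∀ x, HasDerivAt F (f x) x)
    (hf : ∀ x, 0 ≤ f x) (hlt : ∀ x, F x < 1) (hbot : Tendsto F atBot (𝓝 0)) (a : ℝ) :
    IntegrableOn (fun x ↦ f x / (1 - F x)) (Iic a) :=
  integrableOn_Iic_deriv_of_nonneg' (fun x _ ↦ hasDerivAt_neg_log_one_sub hderiv hlt x)
    (fun x _ ↦ div_nonneg (hf x) (sub_pos.2 (hlt x)).le)
    ((hbot.const_sub 1).log (by norm_num)).neg

theorem integral_Iic_div_one_sub_of_hasDerivAt (hderiv : ∀ x, HasDerivAt F (f x) x)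
    (hf : ∀ x, 0 ≤ f x) (hlt : ∀ x, F x < 1) (hbot : Tendsto F atBot (𝓝 0)) (a : ℝ) :
    ∫ x in Iic a, f x / (1 - F x) = -log (1 - F a) := by
  rw [integral_Iic_of_hasDerivAt_of_tendsto' (fun x _ ↦ hasDerivAt_neg_log_one_sub hderiv hlt x)
    (integrableOn_Iic_div_one_sub_of_hasDerivAt hderiv hf hlt hbot a)
    ((hbot.const_sub 1).log (by norm_num)).neg]
  simp

end DistributionTails

section EmpiricalCDF

variable {n : ℕ} {X : Fin n → ℝ}

theorem empiricalCDF_eq_sum (x : ℝ) :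
    empiricalCDF n X x = (n : ℝ)⁻¹ * ∑ i, if X i ≤ x then 1 else 0 := by
  rw [empiricalCDF, Finset.natCast_card_filter, div_eq_inv_mul]

theorem one_sub_empiricalCDF_eq_sum (hn : n ≠ 0) (x : ℝ) :
    1 - empiricalCDF n X x = (n : ℝ)⁻¹ * ∑ i, if x < X i then 1 else 0 := by
  have hsum : ∑ i, ((if X i ≤ x then 1 else 0) + if x < X i then 1 else 0) = (n : ℝ) := by
    calc _ = ∑ _i : Fin n, (1 : ℝ) := Finset.sum_congr rfl fun i _ ↦ by
          by_cases h : X i ≤ x <;> simp [h, not_lt.2, lt_of_not_ge]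
      _ = n := by simp
  rw [Finset.sum_add_distrib] at hsum
  rw [empiricalCDF_eq_sum]
  field_simp
  linarith

theorem sum_ite_le_sq (hX : Monotone X) (x : ℝ) :
    (∑ i, if X i ≤ x then (1 : ℝ) else 0) ^ 2 =
      ∑ k : Fin n, (2 * (k : ℝ) + 1) * if X k ≤ x then 1 else 0 := by
  simp_rw [sq, Finset.sum_mul_sum, ite_zero_mul_ite_zero, mul_one, ← max_le_iff, ← hX.map_max]
  rw [Fin.sum_sum_max fun k ↦ if X k ≤ x then (1 : ℝ) else 0]
  simp [nsmul_eq_mul]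

theorem sum_ite_lt_sq (hX : Monotone X) (x : ℝ) :
    (∑ i, if x < X i then (1 : ℝ) else 0) ^ 2 =
      ∑ k : Fin n, (2 * (k : ℝ) + 1) * if x < X k.rev then 1 else 0 := by
  simp_rw [sq, Finset.sum_mul_sum, ite_zero_mul_ite_zero, mul_one, ← lt_min_iff, ← hX.map_min]
  rw [Fin.sum_sum_min fun k ↦ if x < X k then (1 : ℝ) else 0]
  simp [nsmul_eq_mul]

theorem empiricalCDF_sq_mul (hX : Monotone X) (h : ℝ → ℝ) (x : ℝ) :
    empiricalCDF n X x ^ 2 * h x =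
      ∑ k : Fin n, (2 * (k : ℝ) + 1) / n ^ 2 * (Ici (X k)).indicator h x := by
  rw [empiricalCDF_eq_sum, mul_pow, sum_ite_le_sq hX, Finset.mul_sum, Finset.sum_mul]
  refine Finset.sum_congr rfl fun k _ ↦ ?_
  by_cases hk : X k ≤ x <;> simp [hk, div_eq_mul_inv, mul_comm, mul_left_comm]

theorem one_sub_empiricalCDF_sq_mul (hn : n ≠ 0) (hX : Monotone X) (h : ℝ → ℝ) (x : ℝ) :
    (1 - empiricalCDF n X x) ^ 2 * h x =
      ∑ k : Fin n, (2 * (k : ℝ) + 1) / n ^ 2 * (Iio (X k.rev)).indicator h x := by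
  rw [one_sub_empiricalCDF_eq_sum hn, mul_pow, sum_ite_lt_sq hX, Finset.mul_sum, Finset.sum_mul]
  refine Finset.sum_congr rfl fun k _ ↦ ?_
  by_cases hk : x < X k.rev <;> simp [hk, div_eq_mul_inv, mul_comm, mul_left_comm]

end EmpiricalCDF

section IndicatorIntegral

variable {α ι : Type*} [MeasurableSpace α] {μ : Measure α} (s : Finset ι) (c : ι → ℝ)
  {t : ι → Set α} {h : α → ℝ}

theorem integrable_finset_sum_mul_indicator (ht : ∀ i ∈ s, MeasurableSet (t i))
    (hh : ∀ i ∈ s, IntegrableOn h (t i) μ) :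
    Integrable (fun x ↦ ∑ i ∈ s, c i * (t i).indicator h x) μ :=
  integrable_finsetSum _ fun i hi ↦ ((integrable_indicator_iff (ht i hi)).2 (hh i hi)).const_mul _

theorem integral_finset_sum_mul_indicator (ht : ∀ i ∈ s, MeasurableSet (t i))
    (hh : ∀ i ∈ s, IntegrableOn h (t i) μ) :
    ∫ x, ∑ i ∈ s, c i * (t i).indicator h x ∂μ =
      ∑ i ∈ s, c i * ∫ x in t i, h x ∂μ := by
  rw [integral_finsetSum _ fun i hi ↦
    ((integrable_indicator_iff (ht i hi)).2 (hh i hi)).const_mul _]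
  exact Finset.sum_congr rfl fun i hi ↦ by rw [integral_const_mul, integral_indicator (ht i hi)]

end IndicatorIntegral

theorem sub_sq_div_mul_one_sub_mul {c u : ℝ} (hu₀ : u ≠ 0) (hu₁ : u ≠ 1) (p : ℝ) :
    (c - u) ^ 2 / (u * (1 - u)) * p = c ^ 2 * (p / u) + (1 - c) ^ 2 * (p / (1 - u)) - p := by
  have : 1 - u ≠ 0 := sub_ne_zero.2 hu₁.symm
  field_simp
  ring

theorem andersonDarling_integrand_eq {F f : ℝ → ℝ} {n : ℕ} {X : Fin n → ℝ} (hn : n ≠ 0)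
    (hX : Monotone X) {x : ℝ} (hx₀ : F x ≠ 0) (hx₁ : F x ≠ 1) :
    (empiricalCDF n X x - F x) ^ 2 / (F x * (1 - F x)) * f x =
      (∑ k : Fin n, (2 * (k : ℝ) + 1) / n ^ 2 *
        (Ici (X k)).indicator (fun y ↦ f y / F y) x) +
      (∑ k : Fin n, (2 * (k : ℝ) + 1) / n ^ 2 *
        (Iio (X k.rev)).indicator (fun y ↦ f y / (1 - F y)) x) - f x := by
  rw [sub_sq_div_mul_one_sub_mul hx₀ hx₁, empiricalCDF_sq_mul hX (fun y ↦ f y / F y),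
    one_sub_empiricalCDF_sq_mul hn hX (fun y ↦ f y / (1 - F y))]

theorem integral_andersonDarling_eq {F f : ℝ → ℝ} (hderiv : ∀ x, HasDerivAt F (f x) x)
    (hf : ∀ x, 0 ≤ f x) (hpos : ∀ x, 0 < F x) (hlt : ∀ x, F x < 1)
    (hbot : Tendsto F atBot (𝓝 0)) (htop : Tendsto F atTop (𝓝 1))
    (n : ℕ) (X : Fin n → ℝ) (hX : Monotone X) :
    (n : ℝ) * ∫ x, (empiricalCDF n X x - F x) ^ 2 / (F x * (1 - F x)) * f x
      = -(n : ℝ) - (1 / (n : ℝ)) * ∑ i : Fin n, (2 * (i : ℝ) + 1) *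
          (log (F (X i)) + log (1 - F (X i.rev))) := by
  rcases eq_or_ne n 0 with rfl | hn
  · simp
  have hupper : ∀ k ∈ Finset.univ, IntegrableOn (fun x ↦ f x / F x) (Ici (X k)) :=
    fun k _ ↦ by
      rw [integrableOn_Ici_iff_integrableOn_Ioi]
      exact integrableOn_Ioi_div_of_hasDerivAt hderiv hf hpos htop _
  have hlower :
      ∀ k ∈ Finset.univ, IntegrableOn (fun x ↦ f x / (1 - F x)) (Iio (X (Fin.rev k))) :=
    fun k _ ↦ by
      rw [← integrableOn_Iic_iff_integrableOn_Iio]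
      exact integrableOn_Iic_div_one_sub_of_hasDerivAt hderiv hf hlt hbot _
  have hfint := integrable_deriv_of_nonneg_of_tendsto hderiv hf hbot htop
  simp_rw [andersonDarling_integrand_eq hn hX (hpos _).ne' (hlt _).ne]
  set c : Fin n → ℝ := fun k ↦ (2 * (k : ℝ) + 1) / n ^ 2 with hc
  have hU := integrable_finset_sum_mul_indicator _ c (fun _ _ ↦ measurableSet_Ici) hupper
  have hL := integrable_finset_sum_mul_indicator _ c (fun _ _ ↦ measurableSet_Iio) hlower
  rw [integral_sub (hU.fun_add hL) hfint, integral_add hU hL,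
    integral_finset_sum_mul_indicator _ c (fun _ _ ↦ measurableSet_Ici) hupper,
    integral_finset_sum_mul_indicator _ c (fun _ _ ↦ measurableSet_Iio) hlower,
    integral_of_hasDerivAt_of_tendsto hderiv hfint hbot htop]
  simp_rw [integral_Ici_eq_integral_Ioi, ← integral_Iic_eq_integral_Iio,
    integral_Ioi_div_of_hasDerivAt hderiv hf hpos htop,
    integral_Iic_div_one_sub_of_hasDerivAt hderiv hf hlt hbot]
  rw [sub_zero, mul_sub, mul_one, ← Finset.sum_add_distrib, Finset.mul_sum, Finset.mul_sum,
    sub_eq_add_neg (-(n : ℝ)), ← Finset.sum_neg_distrib, sub_eq_neg_add]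
  congr 1
  refine Finset.sum_congr rfl fun k _ ↦ ?_
  rw [hc]
  field_simp
  ring

theorem stdNormalPDF_eq_gaussianPDFReal : stdNormalPDF = gaussianPDFReal 0 1 := by
  ext t
  simp [stdNormalPDF, gaussianPDFReal, div_eq_inv_mul, mul_comm]

theorem stdNormalCDF_eq_cdf : stdNormalCDF = cdf (gaussianReal 0 1) := by
  ext x
  rw [cdf_eq_real, measureReal_def, gaussianReal_apply_eq_integral _ one_ne_zero,
    ENNReal.toReal_ofReal (integral_nonneg fun _ ↦ gaussianPDFReal_nonneg _ _ _), stdNormalCDF,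
    stdNormalPDF_eq_gaussianPDFReal]

theorem hasDerivAt_stdNormalCDF (x : ℝ) : HasDerivAt stdNormalCDF (stdNormalPDF x) x := by
  have hint : Integrable stdNormalPDF :=
    stdNormalPDF_eq_gaussianPDFReal ▸ integrable_gaussianPDFReal 0 1
  have hcont : Continuous stdNormalPDF := by unfold stdNormalPDF; fun_prop
  have hshift : ∀ y, stdNormalCDF y = stdNormalCDF 0 + ∫ t in (0 : ℝ)..y, stdNormalPDF t :=
    fun y ↦ by
      rw [← intervalIntegral.integral_Iic_sub_Iic hint.integrableOn hint.integrableOn,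
        stdNormalCDF, stdNormalCDF, add_sub_cancel]
  rw [funext hshift]
  exact (intervalIntegral.integral_hasDerivAt_right hint.intervalIntegrable
    (hcont.stronglyMeasurableAtFilter _ _) hcont.continuousAt).const_add _

theorem stdNormalPDF_pos (x : ℝ) : 0 < stdNormalPDF x :=
  stdNormalPDF_eq_gaussianPDFReal ▸ gaussianPDFReal_pos 0 1 x one_ne_zero

theorem strictMono_stdNormalCDF : StrictMono stdNormalCDF :=
  strictMono_of_hasDerivAt_pos hasDerivAt_stdNormalCDF stdNormalPDF_pos

theorem tendsto_stdNormalCDF_atBot : Tendsto stdNormalCDF atBot (𝓝 0) :=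
  stdNormalCDF_eq_cdf ▸ tendsto_cdf_atBot _

theorem tendsto_stdNormalCDF_atTop : Tendsto stdNormalCDF atTop (𝓝 1) :=
  stdNormalCDF_eq_cdf ▸ tendsto_cdf_atTop _

theorem stdNormalCDF_pos (x : ℝ) : 0 < stdNormalCDF x :=
  (strictMono_stdNormalCDF.monotone.le_of_tendsto tendsto_stdNormalCDF_atBot (x - 1)).trans_lt
    (strictMono_stdNormalCDF (sub_one_lt x))

theorem stdNormalCDF_lt_one (x : ℝ) : stdNormalCDF x < 1 :=
  (strictMono_stdNormalCDF (lt_add_one x)).trans_le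
    (strictMono_stdNormalCDF.monotone.ge_of_tendsto tendsto_stdNormalCDF_atTop (x + 1))

theorem anderson_darling_integral_eq_computable_general (n : ℕ) (X : Fin n → ℝ)
    (hX : StrictMono X) :
    (n : ℝ) * ∫ x : ℝ, (empiricalCDF n X x - stdNormalCDF x) ^ 2 /
        (stdNormalCDF x * (1 - stdNormalCDF x)) * stdNormalPDF x
      = -(n : ℝ) - (1 / (n : ℝ)) * ∑ i : Fin n, (2 * (i : ℝ) + 1) *
          (Real.log (stdNormalCDF (X i)) + Real.log (1 - stdNormalCDF (X i.rev))) :=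
  integral_andersonDarling_eq hasDerivAt_stdNormalCDF (fun x ↦ (stdNormalPDF_pos x).le)
    stdNormalCDF_pos stdNormalCDF_lt_one tendsto_stdNormalCDF_atBot tendsto_stdNormalCDF_atTop
    n X hX.monotone

theorem anderson_darling_integral_eq_computable (n : ℕ) (hn : 0 < n) (X : Fin n → ℝ)
    (hX : StrictMono X)
    (hΦ : ∀ i, 0 < stdNormalCDF (X i) ∧ stdNormalCDF (X i) < 1) :
    (n : ℝ) * ∫ x : ℝ, (empiricalCDF n X x - stdNormalCDF x) ^ 2 /
        (stdNormalCDF x * (1 - stdNormalCDF x)) * stdNormalPDF x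
      = -(n : ℝ) - (1 / (n : ℝ)) * ∑ i : Fin n, (2 * (i : ℝ) + 1) *
          (Real.log (stdNormalCDF (X i)) + Real.log (1 - stdNormalCDF (X i.rev))) :=
  anderson_darling_integral_eq_computable_general n X hX
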